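/- Let 1 < q < 2 and let g = h_q⁻¹ be the inverse of h_q(x) = x + |x|^(q-1)·sgn(x). Then g(x) ≤ x^(1/(q-1)) for all x > 0, and there exists a constant D_q > 0 such that for all x₁ > 0 and |x₂| ≤ x₁ with x₂ ≠ x₁, (g(x₁) - g(x₂))/(x₁ - x₂) ≤ x₁^((2-q)/(q-1))/D_q. -/

import Mathlib

/-!
On `[0, ∞)` the map `x ↦ x ^ p` (`0 < p ≤ 1`) is concave, so it lies below its tangent at any
`a > 0`; together with a crude estimate on the negative side this bounds the slope of every chord
of the odd extension `x ↦ |x| ^ p · sign x` from `b ∈ [-a, a)` to `a` from below by `p a^(p-1)`. Hence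
`h = id + |·| ^ p · sign` has chord slopes at least `p a^(p-1)` there, and its inverse `g` has
chord slopes at most `a^(1-p) / p` with `a = g x₁ ≤ x₁^(1/p)`; the last bound holds because
`h (x^(1/p)) = x^(1/p) + x ≥ x`.
-/

open Filter Function

noncomputable section

def signedRpow (p x : ℝ) : ℝ := |x| ^ p * Real.sign x

def addSignedRpow (p x : ℝ) : ℝ := x + signedRpow p x

section SignedRpow

variable {p a b x : ℝ}

lemma signedRpow_of_nonneg (hp : 0 < p) (hx : 0 ≤ x) : signedRpow p x = x ^ p := by
  rcases hx.eq_or_lt with rfl | hx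
  · simp [signedRpow, Real.zero_rpow hp.ne']
  · rw [signedRpow, Real.sign_of_pos hx, abs_of_pos hx, mul_one]

lemma signedRpow_neg (p x : ℝ) : signedRpow p (-x) = -signedRpow p x := by
  rw [signedRpow, signedRpow, abs_neg, Real.sign_neg, mul_neg]

lemma signedRpow_of_nonpos (hp : 0 < p) (hx : x ≤ 0) : signedRpow p x = -(-x) ^ p := by
  rw [← neg_neg x, signedRpow_neg, signedRpow_of_nonneg hp (neg_nonneg.2 hx), neg_neg]

lemma monotone_signedRpow (hp : 0 < p) : Monotone (signedRpow p) := by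
  refine MonotoneOn.Iic_union_Ici (a := 0) (fun x hx y hy hxy => ?_) (fun x hx y hy hxy => ?_)
  · rw [signedRpow_of_nonpos hp hx, signedRpow_of_nonpos hp hy, neg_le_neg_iff]
    exact Real.rpow_le_rpow (neg_nonneg.2 hy) (neg_le_neg hxy) hp.le
  · rw [signedRpow_of_nonneg hp hx, signedRpow_of_nonneg hp hy]
    exact Real.rpow_le_rpow hx hxy hp.le

lemma continuous_signedRpow (hp : 0 < p) : Continuous (signedRpow p) := by
  have hite : signedRpow p = fun x => if x ≤ 0 then -(-x) ^ p else x ^ p := by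
    ext x
    split_ifs with hx
    · exact signedRpow_of_nonpos hp hx
    · exact signedRpow_of_nonneg hp (not_le.1 hx).le
  rw [hite]
  refine ((continuous_neg.rpow_const fun _ => Or.inr hp.le).neg).if_le
    (continuous_id.rpow_const fun _ => Or.inr hp.le) continuous_id continuous_const ?_
  rintro x rfl
  simp [Real.zero_rpow hp.ne']

lemma rpow_le_add_mul_rpow_sub_one_mul_sub (hp0 : 0 ≤ p) (hp1 : p ≤ 1) (ha : 0 < a)
    (hb : 0 ≤ b) : b ^ p ≤ a ^ p + p * a ^ (p - 1) * (b - a) := by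
  have bernoulli := rpow_one_add_le_one_add_mul_self (s := b / a - 1)
    (by linarith [div_nonneg hb ha.le]) hp0 hp1
  rw [add_sub_cancel, Real.div_rpow hb ha.le, div_le_iff₀ (Real.rpow_pos_of_pos ha p)] at bernoulli
  calc b ^ p ≤ (1 + p * (b / a - 1)) * a ^ p := bernoulli
    _ = a ^ p + p * (a ^ p / a) * (b - a) := by field_simp
    _ = a ^ p + p * a ^ (p - 1) * (b - a) := by rw [Real.rpow_sub_one ha.ne']

lemma mul_rpow_sub_one_mul_add_le (hp1 : p ≤ 1) (hb : 0 < b) (hba : b ≤ a) :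
    p * a ^ (p - 1) * (a + b) ≤ a ^ p + b ^ p := by
  have ha : 0 < a := hb.trans_le hba
  have hpow : a ^ (p - 1) ≤ b ^ (p - 1) := Real.rpow_le_rpow_of_nonpos hb hba (by linarith)
  calc p * a ^ (p - 1) * (a + b) = p * a ^ p + p * (a ^ (p - 1) * b) := by
        rw [Real.rpow_sub_one ha.ne']; field_simp
    _ ≤ 1 * a ^ p + 1 * (b ^ (p - 1) * b) := by
        gcongr
    _ = a ^ p + b ^ p := by rw [Real.rpow_sub_one hb.ne']; field_simp

lemma mul_rpow_sub_one_mul_sub_le_signedRpow_sub (hp0 : 0 < p) (hp1 : p ≤ 1) (ha : 0 < a)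
    (hb : |b| ≤ a) : p * a ^ (p - 1) * (a - b) ≤ signedRpow p a - signedRpow p b := by
  rw [signedRpow_of_nonneg hp0 ha.le]
  rcases le_or_gt 0 b with hb0 | hb0
  · rw [signedRpow_of_nonneg hp0 hb0]
    linarith [rpow_le_add_mul_rpow_sub_one_mul_sub hp0.le hp1 ha hb0]
  · rw [signedRpow_of_nonpos hp0 hb0.le, sub_neg_eq_add, sub_eq_add_neg a b]
    exact mul_rpow_sub_one_mul_add_le hp1 (neg_pos.2 hb0) (abs_of_neg hb0 ▸ hb)

end SignedRpow

section AddSignedRpow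

variable {p x y : ℝ}

lemma addSignedRpow_neg (p x : ℝ) : addSignedRpow p (-x) = -addSignedRpow p x := by
  rw [addSignedRpow, addSignedRpow, signedRpow_neg, neg_add]

lemma strictMono_addSignedRpow (hp : 0 < p) : StrictMono (addSignedRpow p) :=
  strictMono_id.add_monotone (monotone_signedRpow hp)

lemma surjective_addSignedRpow (hp : 0 < p) : Surjective (addSignedRpow p) := by
  have hzero : signedRpow p 0 = 0 := by simp [signedRpow]
  refine (continuous_id.add (continuous_signedRpow hp)).surjective ?_ ?_
  · refine tendsto_atTop_mono' _ ?_ tendsto_id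
    filter_upwards [eventually_ge_atTop 0] with x hx
    show x ≤ x + signedRpow p x
    linarith [hzero ▸ monotone_signedRpow hp hx]
  · refine tendsto_atBot_mono' _ ?_ tendsto_id
    filter_upwards [eventually_le_atBot 0] with x hx
    show x + signedRpow p x ≤ x
    linarith [hzero ▸ monotone_signedRpow hp hx]

lemma addSignedRpow_invFun (hp : 0 < p) (x : ℝ) :
    addSignedRpow p (invFun (addSignedRpow p) x) = x :=
  invFun_eq (surjective_addSignedRpow hp x)

lemma invFun_addSignedRpow_le_iff (hp : 0 < p) :
    invFun (addSignedRpow p) x ≤ y ↔ x ≤ addSignedRpow p y := by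
  rw [← (strictMono_addSignedRpow hp).le_iff_le, addSignedRpow_invFun hp]

lemma monotone_invFun_addSignedRpow (hp : 0 < p) : Monotone (invFun (addSignedRpow p)) :=
  fun x y hxy => by rwa [invFun_addSignedRpow_le_iff hp, addSignedRpow_invFun hp]

lemma invFun_addSignedRpow_neg (hp : 0 < p) (x : ℝ) :
    invFun (addSignedRpow p) (-x) = -invFun (addSignedRpow p) x :=
  (strictMono_addSignedRpow hp).injective <| by
    rw [addSignedRpow_neg, addSignedRpow_invFun hp, addSignedRpow_invFun hp]

lemma invFun_addSignedRpow_pos (hp : 0 < p) (hx : 0 < x) : 0 < invFun (addSignedRpow p) x := by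
  rw [← (strictMono_addSignedRpow hp).lt_iff_lt, addSignedRpow_invFun hp]
  simpa [addSignedRpow, signedRpow] using hx

lemma abs_invFun_addSignedRpow_le (hp : 0 < p) (hxy : |y| ≤ x) :
    |invFun (addSignedRpow p) y| ≤ invFun (addSignedRpow p) x := by
  obtain ⟨hxy₁, hxy₂⟩ := abs_le.1 hxy
  have hneg := monotone_invFun_addSignedRpow hp hxy₁
  rw [invFun_addSignedRpow_neg hp] at hneg
  exact abs_le.2 ⟨hneg, monotone_invFun_addSignedRpow hp hxy₂⟩

lemma invFun_addSignedRpow_le_rpow (hp : 0 < p) (hx : 0 < x) :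
    invFun (addSignedRpow p) x ≤ x ^ (1 / p) := by
  have hroot : 0 < x ^ (1 / p) := Real.rpow_pos_of_pos hx _
  rw [invFun_addSignedRpow_le_iff hp, addSignedRpow, signedRpow_of_nonneg hp hroot.le,
    ← Real.rpow_mul hx.le, one_div_mul_cancel hp.ne', Real.rpow_one]
  linarith

lemma invFun_addSignedRpow_slope_le (hp0 : 0 < p) (hp1 : p ≤ 1) (hx : 0 < x) (hxy : |y| ≤ x) :
    (invFun (addSignedRpow p) x - invFun (addSignedRpow p) y) / (x - y) ≤
      invFun (addSignedRpow p) x ^ (1 - p) / p := by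
  set a := invFun (addSignedRpow p) x
  set b := invFun (addSignedRpow p) y
  have ha : 0 < a := invFun_addSignedRpow_pos hp0 hx
  have hab : |b| ≤ a := abs_invFun_addSignedRpow_le hp0 hxy
  have hslope : p * a ^ (p - 1) * (a - b) ≤ x - y := by
    have hchord := mul_rpow_sub_one_mul_sub_le_signedRpow_sub hp0 hp1 ha hab
    have hx' := addSignedRpow_invFun hp0 x
    have hy' := addSignedRpow_invFun hp0 y
    simp only [addSignedRpow] at hx' hy'
    linarith [le_of_abs_le hab]
  have hcancel : a ^ (1 - p) / p * (p * a ^ (p - 1)) = 1 := by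
    rw [div_mul_eq_mul_div, mul_div_assoc, mul_div_cancel_left₀ _ hp0.ne', ← Real.rpow_add ha]
    simp
  refine div_le_of_le_mul₀ (by linarith [le_of_abs_le hxy]) (by positivity) ?_
  calc a - b = a ^ (1 - p) / p * (p * a ^ (p - 1) * (a - b)) := by
        rw [← mul_assoc, hcancel, one_mul]
    _ ≤ a ^ (1 - p) / p * (x - y) := by gcongr

end AddSignedRpow

/-- For `1 < q < 2` and `g = h_q⁻¹`: `g x ≤ x^(1/(q-1))` for `x > 0`, and the
difference quotients of `g` are bounded by `x₁^((2-q)/(q-1)) / D_q`. -/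
theorem stmt_4 (q : ℝ) (hq : 1 < q) (hq2 : q < 2) :
    letI g := Function.invFun (fun x : ℝ => x + |x| ^ (q - 1) * Real.sign x)
    (∀ x : ℝ, 0 < x → g x ≤ x ^ (1 / (q - 1))) ∧
    ∃ D : ℝ, 0 < D ∧
      ∀ x₁ x₂ : ℝ, 0 < x₁ → |x₂| ≤ x₁ → x₂ ≠ x₁ →
        (g x₁ - g x₂) / (x₁ - x₂) ≤ x₁ ^ ((2 - q) / (q - 1)) / D := by
  show let g := invFun (addSignedRpow (q - 1)); _
  intro g
  have hp0 : 0 < q - 1 := by linarith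
  have hp1 : q - 1 ≤ 1 := by linarith
  refine ⟨fun x hx => invFun_addSignedRpow_le_rpow hp0 hx, q - 1, hp0, ?_⟩
  intro x₁ x₂ hx₁ hx₂ _
  have hslope := invFun_addSignedRpow_slope_le hp0 hp1 hx₁ hx₂
  rw [show 1 - (q - 1) = 2 - q by ring] at hslope
  calc (g x₁ - g x₂) / (x₁ - x₂) ≤ g x₁ ^ (2 - q) / (q - 1) := hslope
    _ ≤ (x₁ ^ (1 / (q - 1))) ^ (2 - q) / (q - 1) := by
        gcongr
        · exact (invFun_addSignedRpow_pos hp0 hx₁).le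
        · exact invFun_addSignedRpow_le_rpow hp0 hx₁
    _ = x₁ ^ ((2 - q) / (q - 1)) / (q - 1) := by
        rw [← Real.rpow_mul hx₁.le, one_div_mul_eq_div]
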